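/- arXiv:1601.07131 — 3 statements merged into one kernel-verified Lean document; each statement's English description precedes it below -/
import Mathlib

section
/- Let B be a left brace, a,b ∈ B, and define e_1(a,b) = a*b, e_{m+1}(a,b) = a*e_m(a,b). Then for every positive integer m, L_{a^m}(b) = b + Σ_{i=1}^m C(m,i) e_i(a,b), where C(m,i) is the binomial coefficient. -/
/-- A left brace: an abelian group `(B,+)` and a group `(B,·)` with the
compatibility law `a·(b+c) + a = a·b + a·c`. -/
class LeftBrace (B : Type*) extends AddCommGroup B, Group B where
  left_compat : ∀ a b c : B, a * (b + c) + a = a * b + a * c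

variable {B : Type*} [LeftBrace B]

/-- The star operation `a * b = a·b - a - b` of a left brace. -/
def bstar (a b : B) : B := a * b - a - b

/-- The map `L_a : b ↦ a·b - a`. -/
def lmap (a b : B) : B := a * b - a

/-- The socle of a left brace. -/
def socle (B : Type*) [LeftBrace B] : Set B := {a : B | ∀ b : B, a * b = a + b}

/-- Iterated star products: `eStar a b m = a*(a*(⋯*(a*b)))` with `a` occurring `m` times. -/
def eStar (a : B) (b : B) : ℕ → B
  | 0 => b
  | k + 1 => bstar a (eStar a b k)

/-- The additive subgroup generated by all `a*c` with `a ∈ A`, `c ∈ C`. -/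
def starSub (A C : AddSubgroup B) : AddSubgroup B :=
  AddSubgroup.closure {x : B | ∃ a ∈ A, ∃ c ∈ C, x = bstar a c}

/-- Rump's left chain: `leftPow B n = B^{n+1}`, i.e. `B^1 = B`, `B^{n+1} = B * B^n`. -/
def leftPow (B : Type*) [LeftBrace B] : ℕ → AddSubgroup B
  | 0 => ⊤
  | n + 1 => starSub ⊤ (leftPow B n)

/-- Rump's right chain: `rightPow B n = B^{(n+1)}`, i.e. `B^{(1)} = B`, `B^{(n+1)} = B^{(n)} * B`. -/
def rightPow (B : Type*) [LeftBrace B] : ℕ → AddSubgroup B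
  | 0 => ⊤
  | n + 1 => starSub (rightPow B n) ⊤

/-- The commutator `[g,h] = g⁻¹h⁻¹gh`. -/
def pcomm {G : Type*} [Group G] (g h : G) : G := g⁻¹ * h⁻¹ * g * h

/-- Iterated commutator `engel g h n = [[…[[g,h],h]…],h]` with `h` occurring `n` times. -/
def engel {G : Type*} [Group G] (g h : G) : ℕ → G
  | 0 => g
  | k + 1 => pcomm (engel g h k) h

/-- A group is Engel if every iterated commutator eventually vanishes. -/
def IsEngelGroup (G : Type*) [Group G] : Prop :=
  ∀ g h : G, ∃ n : ℕ, 0 < n ∧ engel g h n = 1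

/-! `a ↦ L_a` is a monoid homomorphism from `(B,·)` into the ring of additive endomorphisms
of `B`, and `L_a = λ_a + 1` with `λ_a x = a*x`. Since `1` commutes with `λ_a`, the binomial
theorem expands `L_{a^m} = (λ_a + 1)^m`, and `λ_a^i b = e_i(a,b)`. -/

theorem add_one_pow_eq_one_add_sum_Icc {R : Type*} [Semiring R] (x : R) (n : ℕ) :
    (x + 1) ^ n = 1 + ∑ i ∈ Finset.Icc 1 n, n.choose i • x ^ i := by
  rw [(Commute.one_right x).add_pow, Finset.sum_range_succ', ← Finset.Ico_add_one_right_eq_Icc,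
    Finset.sum_Ico_eq_sum_range, add_comm, Nat.add_sub_cancel]
  simp [nsmul_eq_mul, Nat.cast_comm, add_comm 1]

theorem LeftBrace.one_eq_zero : (1 : B) = 0 := by
  simpa using LeftBrace.left_compat (1 : B) 0 0

theorem lmap_add (a b c : B) : lmap a (b + c) = lmap a b + lmap a c := by
  have h := LeftBrace.left_compat a b c
  rw [← eq_sub_iff_add_eq] at h
  simp only [lmap, h]; abel

def lmapAddHom (a : B) : B →+ B := AddMonoidHom.mk' (lmap a) (lmap_add a)

theorem lmap_mul (x y b : B) : lmap (x * y) b = lmap x (lmap y b) :=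
  calc lmap (x * y) b = lmap x (y * b) - lmap x y := by simp only [lmap, mul_assoc]; abel
    _ = lmap x (lmap y b) := (map_sub (lmapAddHom x) _ _).symm

theorem lmap_one (b : B) : lmap 1 b = b := by
  simp [lmap, LeftBrace.one_eq_zero]

def lmapHom : B →* Module.End ℤ B where
  toFun a := (lmapAddHom a).toIntLinearMap
  map_one' := LinearMap.ext lmap_one
  map_mul' x y := LinearMap.ext (lmap_mul x y)

theorem lmapHom_apply (a b : B) : lmapHom a b = lmap a b := rfl

theorem lmapHom_sub_one_apply (a x : B) : (lmapHom a - 1) x = bstar a x := rfl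

theorem lmapHom_sub_one_pow_apply (a b : B) (i : ℕ) : ((lmapHom a - 1) ^ i) b = eStar a b i := by
  induction i with
  | zero => rfl
  | succ i ih => rw [pow_succ', Module.End.mul_apply, ih, lmapHom_sub_one_apply, eStar]

theorem stmt3_general {B : Type*} [LeftBrace B] (a b : B) (m : ℕ) :
    lmap (a ^ m) b = b + ∑ i ∈ Finset.Icc 1 m, (m.choose i) • eStar a b i := by
  rw [← lmapHom_apply, map_pow, ← sub_add_cancel (lmapHom a) 1, add_one_pow_eq_one_add_sum_Icc]
  simp only [LinearMap.add_apply, Module.End.one_apply, LinearMap.sum_apply,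
    LinearMap.smul_apply, lmapHom_sub_one_pow_apply]

theorem stmt3 {B : Type*} [LeftBrace B] (a b : B) (m : ℕ) (hm : 1 ≤ m) :
    lmap (a ^ m) b = b + ∑ i ∈ Finset.Icc 1 m, (m.choose i) • eStar a b i :=
  stmt3_general a b m
end

section
/- Let (X,r) be a finite non-degenerate involutive set-theoretic solution of the Yang–Baxter equation such that for all a,b ∈ X there exists a positive integer n with a*(a*(...a*(a*b)...)) = 0 (a occurring n times) in the canonical left brace G(X,r). Then (X,r) is the trivial solution, i.e. r(x,y) = (y,x) for all x,y ∈ X. -/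
variable {B : Type*} [LeftBrace B]

def r12 {X : Type*} (r : X × X → X × X) : X × X × X → X × X × X :=
  fun p => ((r (p.1, p.2.1)).1, (r (p.1, p.2.1)).2, p.2.2)

def r23 {X : Type*} (r : X × X → X × X) : X × X × X → X × X × X :=
  fun p => (p.1, r p.2)

/-- A non-degenerate involutive set-theoretic solution of the Yang–Baxter equation. -/
structure YBSolution (X : Type u) where
  r : X × X → X × X
  ybe : r12 r ∘ r23 r ∘ r12 r = r23 r ∘ r12 r ∘ r23 r
  nondegL : ∀ x : X, Function.Bijective fun y => (r (x, y)).1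
  nondegR : ∀ y : X, Function.Bijective fun x => (r (x, y)).2
  involutive : ∀ p : X × X, r (r p) = p

/-- `G`, with its left brace structure and the map `ι : X → G`, is the structure group
`G(X,r)` with its canonical left brace structure: `ι` is injective, `(G,+)` is free
abelian with basis `ι(X)`, `ˣy = L_x(y)` holds, the defining relations hold, and `G`
has the universal property of the group presented by these relations. -/
structure IsCanonicalBrace {X : Type u} (sol : YBSolution X) (G : Type u) [LeftBrace G]
    (ι : X → G) : Prop where
  inj : Function.Injective ι
  basis : ∃ b : Module.Basis X ℤ G, ∀ x : X, b x = ι x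
  act : ∀ x y : X, lmap (ι x) (ι y) = ι (sol.r (x, y)).1
  rel : ∀ x y : X, ι x * ι y = ι (sol.r (x, y)).1 * ι (sol.r (x, y)).2
  univ : ∀ {H : Type u} [Group H] (f : X → H),
    (∀ x y : X, f x * f y = f (sol.r (x, y)).1 * f (sol.r (x, y)).2) →
    ∃! φ : G →* H, ∀ x : X, φ (ι x) = f x

/-!
For `a ∈ X`, the map `L_a` permutes the basis `ι(X)` of `(G, +)` as `λ_a = (r (a, ·)).1` does, and
`a ∗ v = L_a v - v`, so the hypothesis says that `(L_a - 1)ⁿ` kills `ι b`. If the `λ_a`-orbit of `b`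
has length `m`, the coordinate functional `ι(λ_aᵏ b) ↦ ζᵏ` (zero off the orbit), with `ζ` a primitive
`m`-th root of unity, is an eigenvector of `L_a` for `ζ`; applied to `(L_a - 1)ⁿ (ι b) = 0` it gives
`(ζ - 1)ⁿ = 0`, so `m = 1`. Hence `λ_a = id` for all `a`, and involutivity forces `r` to be the flip.
-/

open MulAction Subgroup Function

namespace LeftBrace

theorem lmap_add (a x y : B) : lmap a (x + y) = lmap a x + lmap a y := by
  have h : a * (x + y) = a * x + a * y - a := eq_sub_of_add_eq (left_compat a x y)
  simp only [lmap, h]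
  abel

def lmapHom (a : B) : B →+ B := AddMonoidHom.mk' (lmap a) (lmap_add a)

theorem eStar_eq_iterate_lmap_sub (a b : B) (n : ℕ) :
    eStar a b n = (fun v => lmap a v - v)^[n] b := by
  induction n with
  | zero => rfl
  | succ n ih => rw [iterate_succ_apply', ← ih]; rfl

end LeftBrace

namespace Equiv.Perm

variable {X : Type*} (σ : Equiv.Perm X)

theorem orbitZPowersEquiv_apply_self {b y : X} (hy : y ∈ orbit (zpowers σ) b) :
    orbitZPowersEquiv σ b ⟨σ y, mem_orbit_of_mem_orbit (⟨σ, mem_zpowers σ⟩ : zpowers σ) hy⟩ =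
      orbitZPowersEquiv σ b ⟨y, hy⟩ + 1 := by
  rw [← Equiv.eq_symm_apply]
  set k := orbitZPowersEquiv σ b ⟨y, hy⟩ with hk
  have hy' : (⟨y, hy⟩ : orbit (zpowers σ) b) =
      (⟨σ, mem_zpowers σ⟩ : zpowers σ) ^ (k.cast : ℤ) • ⟨b, mem_orbit_self b⟩ := by
    rw [← orbitZPowersEquiv_symm_apply, hk, Equiv.symm_apply_apply]
  have hk1 : k + 1 = ((1 + k.cast : ℤ) : ZMod _) := by simp [add_comm]
  rw [hk1, orbitZPowersEquiv_symm_apply', zpow_one_add, mul_smul, ← hy']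
  rfl

theorem exists_eigenfunction [Finite X] (b : X) :
    ∃ (ζ : ℂ) (f : X → ℂ), (ζ = 1 → σ b = b) ∧ f b = 1 ∧ ∀ y, f (σ y) = ζ * f y := by
  classical
  let e := orbitZPowersEquiv σ b
  refine ⟨ZMod.stdAddChar (N := minimalPeriod (σ • ·) b) 1,
    fun y => if hy : y ∈ orbit (zpowers σ) b then ZMod.stdAddChar (e ⟨y, hy⟩) else 0, ?_, ?_, ?_⟩
  · intro hζ
    have h1 : (1 : ZMod (minimalPeriod (σ • ·) b)) = 0 :=
      ZMod.injective_stdAddChar (hζ.trans (AddChar.map_zero_eq_one _).symm)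
    exact minimalPeriod_eq_one_iff_isFixedPt.mp (ZMod.one_eq_zero_iff.mp h1)
  · have he : e ⟨b, mem_orbit_self b⟩ = 0 := by
      rw [← Equiv.eq_symm_apply, ← Int.cast_zero, orbitZPowersEquiv_symm_apply', zpow_zero, one_smul]
    simp only [dif_pos (mem_orbit_self b), he, AddChar.map_zero_eq_one]
  · intro y
    dsimp only
    by_cases hy : y ∈ orbit (zpowers σ) b
    · have hσy : σ y ∈ orbit (zpowers σ) b :=
        mem_orbit_of_mem_orbit (⟨σ, mem_zpowers σ⟩ : zpowers σ) hy
      rw [dif_pos hy, dif_pos hσy, orbitZPowersEquiv_apply_self,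
        AddChar.map_add_eq_mul, mul_comm]
    · have hσy : σ y ∉ orbit (zpowers σ) b := fun h =>
        hy (by simpa using mem_orbit_of_mem_orbit (⟨σ⁻¹, inv_mem (mem_zpowers σ)⟩ : zpowers σ) h)
      simp only [dif_neg hy, dif_neg hσy, mul_zero]

end Equiv.Perm

theorem Module.Basis.apply_eq_of_iterate_sub_eq_zero {X M : Type*} [Finite X] [AddCommGroup M]
    (bas : Module.Basis X ℤ M) (σ : Equiv.Perm X) (T : M →+ M) (hT : ∀ x, T (bas x) = bas (σ x))
    {b : X} {n : ℕ} (hn : 0 < n) (h : (fun v => T v - v)^[n] (bas b) = 0) : σ b = b := by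
  obtain ⟨ζ, f, hζ, hfb, hf⟩ := σ.exists_eigenfunction b
  let φ := bas.constr ℤ f
  have hφT : ∀ v, φ (T v) = ζ * φ v := by
    have hcomp : φ.comp T.toIntLinearMap = ζ • φ := bas.ext fun x => by simp [φ, hT, hf]
    exact fun v => by simpa using LinearMap.congr_fun hcomp v
  have hiter : ∀ k v, φ ((fun v => T v - v)^[k] v) = (ζ - 1) ^ k * φ v := by
    intro k
    induction k with
    | zero => simp
    | succ k ih => intro v; rw [iterate_succ_apply', map_sub, hφT, ih]; ring
  have hpow : (ζ - 1) ^ n = 0 := by simpa [h, φ, hfb] using (hiter n (bas b)).symm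
  exact hζ (sub_eq_zero.mp ((pow_eq_zero_iff hn.ne').mp hpow))

theorem YBSolution.r_eq_swap_of_fst_eq {X : Type u} (sol : YBSolution X)
    (h : ∀ x y, (sol.r (x, y)).1 = y) (p : X × X) : sol.r p = p.swap := by
  obtain ⟨x, y⟩ := p
  have hr : sol.r (x, y) = (y, (sol.r (x, y)).2) := Prod.ext (h x y) rfl
  have hback := sol.involutive (x, y)
  rw [hr] at hback ⊢
  have hx := h y (sol.r (x, y)).2
  rw [hback] at hx
  rw [← hx]
  rfl

theorem stmt8 {X : Type u} [Finite X] (sol : YBSolution X)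
    {G : Type u} [LeftBrace G] (ι : X → G) (hG : IsCanonicalBrace sol G ι)
    (hstar : ∀ a b : X, ∃ n : ℕ, 0 < n ∧ eStar (ι a) (ι b) n = 0) :
    ∀ p : X × X, sol.r p = (p.2, p.1) := by
  obtain ⟨bas, hbas⟩ := hG.basis
  refine sol.r_eq_swap_of_fst_eq fun a b => ?_
  obtain ⟨n, hn, hzero⟩ := hstar a b
  refine bas.apply_eq_of_iterate_sub_eq_zero (Equiv.ofBijective _ (sol.nondegL a))
    (LeftBrace.lmapHom (ι a)) (fun x => ?_) hn ?_
  · simp [hbas, LeftBrace.lmapHom, hG.act]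
  · rw [hbas, ← hzero, LeftBrace.eStar_eq_iterate_lmap_sub]
    rfl
end

section
/- Every finite nilpotent group is isomorphic to a subgroup of the adjoint group of a finite nilpotent ring. -/
def listMul {R : Type*} [Mul R] : R → List R → R
  | x, [] => x
  | x, y :: l => listMul (x * y) l

/-- A nilpotent ring: all products of sufficiently many elements vanish. -/
def IsNilRing (R : Type*) (i : NonUnitalRing R) : Prop :=
  letI := i
  ∃ n : ℕ, ∀ (x : R) (l : List R), l.length = n → listMul x l = 0

/-- `G` is isomorphic to a subgroup of the adjoint group `(R, ∘)`,
`a ∘ b = a + b + ab`, of the ring `R`. -/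
def AdjointEmbedding (G : Type*) [Group G] (R : Type*) (i : NonUnitalRing R) : Prop :=
  letI := i
  ∃ f : G → R, Function.Injective f ∧ f 1 = 0 ∧
    ∀ g h : G, f (g * h) = f g + f h + f g * f h

/-!
A finite nilpotent group is the direct product of its Sylow subgroups, and a finite product of
finite nilpotent rings is again one, so it suffices to treat a finite `p`-group `P`. There
`g ↦ g - 1` embeds `P` into the adjoint group of the augmentation ideal `I` of `𝔽_p[P]`, and `I` is
nilpotent: on a nonzero finite `𝔽_p[P]`-module the number of `P`-fixed vectors is divisible by
`p`, so some nonzero vector is fixed and hence killed by `I`. Applied to `𝔽_p[P] ⧸ W`, this makes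
the chain `W₀ = 0`, `W_{j+1} = {a | I a ⊆ W_j}` strictly increasing until it reaches `𝔽_p[P]`,
which forces `I ^ n = 0`.
-/

theorem listMul_eq_mul_prod {M : Type*} [Monoid M] (x : M) (l : List M) :
    listMul x l = x * l.prod := by
  induction l generalizing x with
  | nil => simp [listMul]
  | cons y l ih => simp [listMul, ih, mul_assoc]

theorem listMul_append {R : Type*} [Mul R] (x : R) (l₁ l₂ : List R) :
    listMul x (l₁ ++ l₂) = listMul (listMul x l₁) l₂ := by
  induction l₁ generalizing x with
  | nil => rfl
  | cons y l ih => simp [listMul, ih]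

theorem zero_listMul {R : Type*} [MulZeroClass R] (l : List R) : listMul 0 l = 0 := by
  induction l with
  | nil => rfl
  | cons y l ih => simpa [listMul] using ih

theorem map_listMul {R S F : Type*} [Mul R] [Mul S] [FunLike F R S] [MulHomClass F R S]
    (f : F) (x : R) (l : List R) : f (listMul x l) = listMul (f x) (l.map f) := by
  induction l generalizing x with
  | nil => rfl
  | cons y l ih => simp [listMul, ih, map_mul]

theorem listMul_eq_zero_of_le {R : Type*} [MulZeroClass R] {n : ℕ}
    (hn : ∀ (x : R) (l : List R), l.length = n → listMul x l = 0)
    (x : R) {l : List R} (hl : n ≤ l.length) : listMul x l = 0 := by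
  rw [← List.take_append_drop n l, listMul_append, hn x _ (List.length_take_of_le hl),
    zero_listMul]

theorem IsNilRing.pi {ι : Type*} [Finite ι] {R : ι → Type*} [∀ i, NonUnitalRing (R i)]
    (h : ∀ i, IsNilRing (R i) inferInstance) : IsNilRing (∀ i, R i) inferInstance := by
  choose n hn using h
  have := Fintype.ofFinite ι
  refine ⟨Finset.univ.sup n, fun x l hl => funext fun i => ?_⟩
  change Pi.evalMulHom R i (listMul x l) = 0
  rw [map_listMul]
  exact listMul_eq_zero_of_le (hn i) _ (by simpa [hl] using Finset.le_sup (Finset.mem_univ i))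

theorem AdjointEmbedding.pi {ι : Type*} {H R : ι → Type*} [∀ i, Group (H i)]
    [∀ i, NonUnitalRing (R i)] (h : ∀ i, AdjointEmbedding (H i) (R i) inferInstance) :
    AdjointEmbedding (∀ i, H i) (∀ i, R i) inferInstance := by
  choose f hinj hone hmul using h
  exact ⟨fun g i => f i (g i), fun g g' hg => funext fun i => hinj i (congrFun hg i),
    funext hone, fun g g' => funext fun i => hmul i (g i) (g' i)⟩

theorem AdjointEmbedding.of_injective {G H R : Type*} [Group G] [Group H] {i : NonUnitalRing R}
    (h : AdjointEmbedding H R i) (φ : G →* H) (hφ : Function.Injective φ) :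
    AdjointEmbedding G R i := by
  obtain ⟨f, hinj, hone, hmul⟩ := h
  exact ⟨f ∘ φ, hinj.comp hφ, by simp [hone], fun g g' => by simp [hmul]⟩

def HasFiniteNilAdjointEmbedding (G : Type*) [Group G] : Prop :=
  ∃ (R : Type) (i : NonUnitalRing R), Finite R ∧ IsNilRing R i ∧ AdjointEmbedding G R i

theorem HasFiniteNilAdjointEmbedding.pi {ι : Type} [Finite ι] {H : ι → Type*}
    [∀ i, Group (H i)] (h : ∀ i, HasFiniteNilAdjointEmbedding (H i)) :
    HasFiniteNilAdjointEmbedding (∀ i, H i) := by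
  choose R _ _ hnil hemb using h
  exact ⟨∀ i, R i, inferInstance, inferInstance, .pi hnil, .pi hemb⟩

theorem HasFiniteNilAdjointEmbedding.of_injective {G H : Type*} [Group G] [Group H]
    (h : HasFiniteNilAdjointEmbedding H) (φ : G →* H) (hφ : Function.Injective φ) :
    HasFiniteNilAdjointEmbedding G := by
  obtain ⟨R, i, hfin, hnil, hemb⟩ := h
  exact ⟨R, i, hfin, hnil, hemb.of_injective φ hφ⟩

section LeftColon

variable {A : Type*} [Ring A]

def Submodule.leftColon (W : Submodule A A) (I : TwoSidedIdeal A) : Submodule A A where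
  carrier := {a | ∀ x ∈ I, x * a ∈ W}
  add_mem' ha hb x hx := by rw [mul_add]; exact W.add_mem (ha x hx) (hb x hx)
  zero_mem' x _ := by rw [mul_zero]; exact W.zero_mem
  smul_mem' b a ha x hx := by
    rw [smul_eq_mul, ← mul_assoc]
    exact ha _ (I.mul_mem_right x b hx)

theorem Submodule.le_leftColon (W : Submodule A A) (I : TwoSidedIdeal A) : W ≤ W.leftColon I :=
  fun _ ha x _ => W.smul_mem x ha

theorem TwoSidedIdeal.exists_list_prod_eq_zero [IsNoetherianRing A] (I : TwoSidedIdeal A)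
    (h : ∀ W : Submodule A A, W ≠ ⊤ → W < W.leftColon I) :
    ∃ n, ∀ l : List A, (∀ y ∈ l, y ∈ I) → n ≤ l.length → l.prod = 0 := by
  suffices ∀ W : Submodule A A,
      ∃ n, ∀ l : List A, (∀ y ∈ l, y ∈ I) → n ≤ l.length → ∀ a, l.prod * a ∈ W by
    obtain ⟨n, hn⟩ := this ⊥
    exact ⟨n, fun l hI hl => by simpa using hn l hI hl 1⟩
  intro W
  induction W using WellFoundedGT.induction with
  | _ W ih =>
  by_cases hW : W = ⊤
  · exact ⟨0, fun _ _ _ _ => hW ▸ Submodule.mem_top⟩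
  obtain ⟨n, hn⟩ := ih _ (h W hW)
  refine ⟨n + 1, fun l hI hl a => ?_⟩
  obtain ⟨y, l, rfl⟩ := List.exists_cons_of_length_pos (by omega : 0 < l.length)
  rw [List.prod_cons, mul_assoc]
  exact hn l (fun z hz => hI z (List.mem_cons_of_mem y hz)) (by simpa using hl) a y
    (hI y List.mem_cons_self)

end LeftColon

namespace MonoidAlgebra

variable (k : Type*) [CommRing k] (P : Type*) [Group P]

instance finite [Finite k] [Finite P] : Finite (MonoidAlgebra k P) :=
  Finite.of_injective (fun x => (x.coeff : P → k)) (DFunLike.coe_injective.comp coeff_injective)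

noncomputable def augmentation : MonoidAlgebra k P →ₐ[k] k :=
  lift k k P 1

@[simp]
theorem augmentation_of (g : P) : augmentation k P (of k P g) = 1 := by
  simp [augmentation]

noncomputable def augmentationIdeal : TwoSidedIdeal (MonoidAlgebra k P) :=
  TwoSidedIdeal.ker (augmentation k P)

theorem mem_augmentationIdeal {x : MonoidAlgebra k P} :
    x ∈ augmentationIdeal k P ↔ augmentation k P x = 0 :=
  TwoSidedIdeal.mem_ker _

theorem of_sub_one_mem_augmentationIdeal (g : P) : of k P g - 1 ∈ augmentationIdeal k P := by
  rw [mem_augmentationIdeal, map_sub, augmentation_of, map_one, sub_self]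

variable {k P}

theorem smul_eq_augmentation_smul {M : Type*} [AddCommGroup M] [Module (MonoidAlgebra k P) M]
    {m : M} (hm : ∀ g : P, of k P g • m = m) (x : MonoidAlgebra k P) :
    x • m = algebraMap k (MonoidAlgebra k P) (augmentation k P x) • m := by
  induction x using MonoidAlgebra.induction_on with
  | of g => rw [hm g, augmentation_of, map_one, one_smul]
  | add x y hx hy => rw [add_smul, hx, hy, map_add, map_add, add_smul]
  | smul r x hx =>
    rw [map_smul, smul_eq_mul, map_mul, mul_smul, ← hx, ← mul_smul, ← Algebra.smul_def]

theorem _root_.IsPGroup.exists_ne_zero_augmentationIdeal_smul_eq_zero {p : ℕ} [Fact p.Prime]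
    [CharP k p] [Finite P] (hP : IsPGroup p P) (M : Type*) [AddCommGroup M]
    [Module (MonoidAlgebra k P) M] [Finite M] [Nontrivial M] :
    ∃ m : M, m ≠ 0 ∧ ∀ x ∈ augmentationIdeal k P, x • m = 0 := by
  let := MulAction.compHom M (of k P)
  have hp : p ∣ Nat.card M := by
    obtain ⟨m, hm⟩ := exists_ne (0 : M)
    have hpm : p • m = 0 := by
      rw [← Nat.cast_smul_eq_nsmul (MonoidAlgebra k P), ← map_natCast (algebraMap k _),
        CharP.cast_eq_zero, map_zero, zero_smul]
    exact addOrderOf_eq_prime hpm hm ▸ addOrderOf_dvd_natCard m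
  obtain ⟨m, hfix, hm⟩ :=
    hP.exists_fixed_point_of_prime_dvd_card_of_fixed_point M hp (a := 0)
      fun g => show of k P g • (0 : M) = 0 from smul_zero _
  refine ⟨m, hm.symm, fun x hx => ?_⟩
  rw [smul_eq_augmentation_smul hfix, (mem_augmentationIdeal k P).1 hx, map_zero, zero_smul]

theorem _root_.IsPGroup.lt_leftColon_augmentationIdeal {p : ℕ} [Fact p.Prime] [CharP k p]
    [Finite k] [Finite P] (hP : IsPGroup p P)
    {W : Submodule (MonoidAlgebra k P) (MonoidAlgebra k P)} (hW : W ≠ ⊤) :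
    W < W.leftColon (augmentationIdeal k P) := by
  have : Nontrivial (MonoidAlgebra k P ⧸ W) := Submodule.Quotient.nontrivial_iff.2 hW
  have : Finite (MonoidAlgebra k P ⧸ W) := Finite.of_surjective _ W.mkQ_surjective
  obtain ⟨m, hm, hI⟩ :=
    hP.exists_ne_zero_augmentationIdeal_smul_eq_zero (k := k) (MonoidAlgebra k P ⧸ W)
  obtain ⟨a, rfl⟩ := Submodule.Quotient.mk_surjective W m
  refine lt_of_le_of_ne (W.le_leftColon _) fun h => hm ?_
  rw [Submodule.Quotient.mk_eq_zero, h]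
  intro x hx
  rw [← smul_eq_mul, ← Submodule.Quotient.mk_eq_zero, Submodule.Quotient.mk_smul]
  exact hI x hx

theorem _root_.IsPGroup.isNilRing_augmentationIdeal {p : ℕ} [Fact p.Prime] [CharP k p]
    [Finite k] [Finite P] (hP : IsPGroup p P) :
    IsNilRing (augmentationIdeal k P) inferInstance := by
  obtain ⟨n, hn⟩ := (augmentationIdeal k P).exists_list_prod_eq_zero
    fun _ hW => hP.lt_leftColon_augmentationIdeal hW
  refine ⟨n, fun x l hl => Subtype.ext ?_⟩
  change NonUnitalSubringClass.subtype _ (listMul x l) = 0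
  rw [map_listMul, listMul_eq_mul_prod, ← List.prod_cons, ← List.map_cons]
  refine hn _ (fun y hy => ?_) (by simp [hl])
  obtain ⟨z, -, rfl⟩ := List.mem_map.1 hy
  exact z.2

theorem adjointEmbedding_augmentationIdeal [Nontrivial k] :
    AdjointEmbedding P (augmentationIdeal k P) inferInstance :=
  ⟨fun g => ⟨of k P g - 1, of_sub_one_mem_augmentationIdeal k P g⟩,
    fun _ _ h => of_injective (sub_left_injective (congrArg Subtype.val h)),
    Subtype.ext (sub_eq_zero.2 (map_one _)), fun g h => Subtype.ext <| by
      change of k P (g * h) - 1 = of k P g - 1 + (of k P h - 1) + (of k P g - 1) * (of k P h - 1)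
      rw [map_mul]
      noncomm_ring⟩

end MonoidAlgebra

theorem IsPGroup.hasFiniteNilAdjointEmbedding {p : ℕ} [Fact p.Prime] {P : Type} [Group P]
    [Finite P] (hP : IsPGroup p P) : HasFiniteNilAdjointEmbedding P :=
  ⟨MonoidAlgebra.augmentationIdeal (ZMod p) P, inferInstance, inferInstance,
    hP.isNilRing_augmentationIdeal, MonoidAlgebra.adjointEmbedding_augmentationIdeal⟩

theorem stmt18 (G : Type u) [Group G] [Finite G] (hG : Group.IsNilpotent G) :
    ∃ (R : Type) (i : NonUnitalRing R),
      Finite R ∧ IsNilRing R i ∧ AdjointEmbedding G R i := by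
  -- the ring has to live in `Type`, so decompose a copy of `G` in `Type` into Sylow subgroups
  let e : Shrink.{0} G ≃* G := Shrink.mulEquiv
  obtain ⟨sylow⟩ := ((Group.isNilpotent_of_finite_tfae (G := Shrink.{0} G)).out 0 4).mp
    ((Group.isNilpotent_congr e).2 hG)
  have hSylow (p : (Nat.card (Shrink.{0} G)).primeFactors) (S : Sylow p (Shrink.{0} G)) :
      HasFiniteNilAdjointEmbedding S :=
    have : Fact (p : ℕ).Prime := ⟨Nat.prime_of_mem_primeFactors p.2⟩
    S.isPGroup'.hasFiniteNilAdjointEmbedding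
  exact (HasFiniteNilAdjointEmbedding.pi fun p => .pi (hSylow p)).of_injective
    (sylow.symm.toMonoidHom.comp e.symm.toMonoidHom) (sylow.symm.injective.comp e.symm.injective)
end
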